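/- If f : A → B is a separative embedding of normal disjunctive bounded distributive lattices — i.e., an injective lattice homomorphism such that whenever b ⊓ c = ⊥ in B there exists a ∈ A with f(a) ≥ b and f(a) ⊓ c = ⊥ — then the induced map f^S : S(B) → S(A) on maximal spectra, sending M to the unique maximal filter containing f⁻¹[M], is a homeomorphism. -/
import Mathlib

open Set

universe u v

/-- A (lattice) filter: a nonempty, upward-closed subset closed under meets. -/
def IsLatFilter {A : Type u} [DistribLattice A] [BoundedOrder A] (F : Set A) : Prop :=
  F.Nonempty ∧ (∀ a ∈ F, ∀ b : A, a ≤ b → b ∈ F) ∧ ∀ a ∈ F, ∀ b ∈ F, a ⊓ b ∈ F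

/-- A proper filter: a filter omitting `⊥`. -/
def IsProperLatFilter {A : Type u} [DistribLattice A] [BoundedOrder A] (F : Set A) : Prop :=
  IsLatFilter F ∧ (⊥ : A) ∉ F

/-- A prime filter: a proper filter `F` with `a ⊔ b ∈ F → a ∈ F ∨ b ∈ F`. -/
def IsPrimeLatFilter {A : Type u} [DistribLattice A] [BoundedOrder A] (F : Set A) : Prop :=
  IsProperLatFilter F ∧ ∀ a b : A, a ⊔ b ∈ F → a ∈ F ∨ b ∈ F

/-- A maximal filter: a proper filter maximal under inclusion. -/
def IsMaxLatFilter {A : Type u} [DistribLattice A] [BoundedOrder A] (F : Set A) : Prop :=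
  IsProperLatFilter F ∧ ∀ G : Set A, IsProperLatFilter G → F ⊆ G → G = F

/-- A bounded distributive lattice is normal if disjoint elements can be
separated: whenever `a ⊓ b = ⊥` there are `a', b'` with `a ⊓ a' = ⊥`,
`b ⊓ b' = ⊥` and `a' ⊔ b' = ⊤`. -/
def IsNormalLattice (A : Type u) [DistribLattice A] [BoundedOrder A] : Prop :=
  ∀ a b : A, a ⊓ b = ⊥ → ∃ a' b' : A, a ⊓ a' = ⊥ ∧ b ⊓ b' = ⊥ ∧ a' ⊔ b' = ⊤

/-- A bounded distributive lattice is disjunctive if for any two distinct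
elements there is a nonbottom element below one of them and disjoint from the
other. -/
def IsDisjunctiveLattice (A : Type u) [DistribLattice A] [BoundedOrder A] : Prop :=
  ∀ a b : A, a ≠ b → ∃ c : A, c ≠ ⊥ ∧ ((c ≤ a ∧ c ⊓ b = ⊥) ∨ (c ≤ b ∧ c ⊓ a = ⊥))

/-- The maximal spectrum: the set of maximal proper filters of `A`. -/
def MaxSpec (A : Type u) [DistribLattice A] [BoundedOrder A] :=
  {M : Set A // IsMaxLatFilter M}

/-- `a♯ = {M ∈ S(A) : a ∈ M}`. -/
def sharp {A : Type u} [DistribLattice A] [BoundedOrder A] (a : A) : Set (MaxSpec A) :=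
  {M : MaxSpec A | a ∈ M.1}

/-- The spectral topology on `MaxSpec A`, with the sets `a♯` as a closed base. -/
def specTop (A : Type u) [DistribLattice A] [BoundedOrder A] :
    TopologicalSpace (MaxSpec A) :=
  TopologicalSpace.generateFrom {s | ∃ a : A, s = (sharp a)ᶜ}

section Aux
variable {A : Type u} [DistribLattice A] [BoundedOrder A]

lemma latFilter_top_mem {F : Set A} (hF : IsLatFilter F) : ⊤ ∈ F := by
  obtain ⟨a, ha⟩ := hF.1
  exact hF.2.1 a ha ⊤ le_top

lemma properFilter_disj {F : Set A} (hF : IsProperLatFilter F) {x y : A}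
    (hx : x ∈ F) (hy : y ∈ F) (hxy : x ⊓ y = ⊥) : False :=
  hF.2 (hxy ▸ hF.1.2.2 x hx y hy)

lemma maxFilter_compl {M : Set A} (hM : IsMaxLatFilter M) {a : A} (ha : a ∉ M) :
    ∃ m ∈ M, a ⊓ m = ⊥ := by
  by_contra hcon
  push_neg at hcon
  have htopM : ⊤ ∈ M := latFilter_top_mem hM.1.1
  have hMG : M ⊆ {x | ∃ m ∈ M, a ⊓ m ≤ x} := fun m hm => ⟨m, hm, inf_le_right⟩
  have hGfil : IsProperLatFilter {x | ∃ m ∈ M, a ⊓ m ≤ x} := by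
    refine ⟨⟨⟨a, ⟨⊤, htopM, by simp⟩⟩, ?_, ?_⟩, ?_⟩
    · rintro x ⟨m, hm, hle⟩ y hxy
      exact ⟨m, hm, hle.trans hxy⟩
    · rintro x ⟨m, hm, hle⟩ y ⟨m', hm', hle'⟩
      refine ⟨m ⊓ m', hM.1.1.2.2 m hm m' hm', ?_⟩
      calc a ⊓ (m ⊓ m') = (a ⊓ m) ⊓ (a ⊓ m') := by rw [inf_inf_distrib_left]
        _ ≤ x ⊓ y := inf_le_inf hle hle'
    · rintro ⟨m, hm, hle⟩
      exact hcon m hm (le_bot_iff.mp hle)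
  have hG := hM.2 _ hGfil hMG
  exact ha (hG ▸ ⟨⊤, htopM, by simp⟩)

lemma maxFilter_prime {M : Set A} (hM : IsMaxLatFilter M) {a b : A}
    (hab : a ⊔ b ∈ M) : a ∈ M ∨ b ∈ M := by
  by_contra hcon
  push_neg at hcon
  obtain ⟨m₁, hm₁, h1⟩ := maxFilter_compl hM hcon.1
  obtain ⟨m₂, hm₂, h2⟩ := maxFilter_compl hM hcon.2
  have hmm : m₁ ⊓ m₂ ∈ M := hM.1.1.2.2 m₁ hm₁ m₂ hm₂
  apply properFilter_disj hM.1 hab hmm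
  have ha' : a ⊓ (m₁ ⊓ m₂) = ⊥ :=
    le_bot_iff.mp (le_trans (inf_le_inf_left a inf_le_left) h1.le)
  have hb' : b ⊓ (m₁ ⊓ m₂) = ⊥ :=
    le_bot_iff.mp (le_trans (inf_le_inf_left b inf_le_right) h2.le)
  simp [inf_sup_right, ha', hb']

end Aux

section Emb
variable {A : Type u} {B : Type u} [DistribLattice A] [BoundedOrder A]
  [DistribLattice B] [BoundedOrder B]

/-- The candidate image filter: elements compatible (through `f`) with `M`. -/
def stdSet (f : A → B) (M : Set B) : Set A :=
  {a | ∀ c : A, a ⊓ c = ⊥ → f c ∉ M}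

/-- The candidate inverse image: elements of `B` compatible with `f[N]`. -/
def hSet (f : A → B) (N : Set A) : Set B :=
  {b | ∀ c : B, b ⊓ c = ⊥ → ∀ a ∈ N, ¬ f a ≤ c}

lemma preimage_subset_stdSet {f : A → B}
    (hinf : ∀ a b : A, f (a ⊓ b) = f a ⊓ f b) (hbot : f ⊥ = ⊥)
    {M : Set B} (hM : IsProperLatFilter M) : f ⁻¹' M ⊆ stdSet f M := by
  intro a ha c hc hfc
  exact properFilter_disj hM ha hfc (by rw [← hinf, hc, hbot])

lemma not_mem_stdSet {f : A → B} {M : Set B} {a : A} (h : a ∉ stdSet f M) :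
    ∃ c : A, a ⊓ c = ⊥ ∧ f c ∈ M := by
  simp only [stdSet, mem_setOf_eq] at h
  push_neg at h
  exact h

lemma stdSet_max (hnA : IsNormalLattice A) {f : A → B}
    (hbot : f ⊥ = ⊥) (htop : f ⊤ = ⊤)
    (hinf : ∀ a b : A, f (a ⊓ b) = f a ⊓ f b)
    (hsup : ∀ a b : A, f (a ⊔ b) = f a ⊔ f b)
    {M : Set B} (hM : IsMaxLatFilter M) : IsMaxLatFilter (stdSet f M) := by
  have htopM : ⊤ ∈ M := latFilter_top_mem hM.1.1
  have hproper : IsProperLatFilter (stdSet f M) := by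
    refine ⟨⟨⟨⊤, ?_⟩, ?_, ?_⟩, ?_⟩
    · intro c hc
      have : c = ⊥ := by simpa using hc
      rw [this, hbot]
      exact hM.1.2
    · intro a ha b hab c hc
      exact ha c (le_bot_iff.mp (hc ▸ inf_le_inf_right c hab))
    · intro a ha b hb c hc
      have h1 : a ⊓ (b ⊓ c) = ⊥ := by rw [← inf_assoc]; exact hc
      obtain ⟨a', b', haa', hbb', hab'⟩ := hnA a (b ⊓ c) h1
      have hfa' : f a' ∉ M := ha a' haa'
      have hsupM : f a' ⊔ f b' ∈ M := by rw [← hsup, hab', htop]; exact htopM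
      have hfb' : f b' ∈ M := (maxFilter_prime hM hsupM).resolve_left hfa'
      have h2 : b ⊓ (c ⊓ b') = ⊥ := by rw [← inf_assoc]; exact hbb'
      have h3 : f (c ⊓ b') ∉ M := hb _ h2
      intro hfc
      exact h3 (by rw [hinf]; exact hM.1.1.2.2 _ hfc _ hfb')
    · intro hbotmem
      exact hbotmem ⊤ (by simp) (htop ▸ htopM)
  refine ⟨hproper, ?_⟩
  intro G hG hsub
  refine Set.Subset.antisymm ?_ hsub
  intro x hxG
  by_contra hx
  obtain ⟨c, hxc, hfc⟩ := not_mem_stdSet hx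
  obtain ⟨x', c', hxx', hcc', hx'c'⟩ := hnA x c hxc
  have hfc' : f c' ∉ M := fun h =>
    properFilter_disj hM.1 hfc h (by rw [← hinf, hcc', hbot])
  have hsupM : f x' ⊔ f c' ∈ M := by rw [← hsup, hx'c', htop]; exact htopM
  have hfx' : f x' ∈ M := (maxFilter_prime hM hsupM).resolve_right hfc'
  have hx'G : x' ∈ G := hsub (preimage_subset_stdSet hinf hbot hM.1 hfx')
  exact properFilter_disj hG hxG hx'G hxx'

lemma image_subset_hSet {f : A → B} (hinj : Function.Injective f)
    (hbot : f ⊥ = ⊥) (hinf : ∀ a b : A, f (a ⊓ b) = f a ⊓ f b)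
    {N : Set A} (hN : IsProperLatFilter N) {a₀ : A} (ha₀ : a₀ ∈ N) :
    f a₀ ∈ hSet f N := by
  intro c hc a haN hle
  have h1 : f a₀ ⊓ f a = ⊥ := le_bot_iff.mp (hc ▸ inf_le_inf_left (f a₀) hle)
  have h2 : a₀ ⊓ a = ⊥ := hinj (by rw [hinf, h1, hbot])
  exact properFilter_disj hN ha₀ haN h2

lemma not_mem_hSet {f : A → B} {N : Set A} {b : B} (h : b ∉ hSet f N) :
    ∃ a ∈ N, b ⊓ f a = ⊥ := by
  simp only [hSet, mem_setOf_eq] at h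
  push_neg at h
  obtain ⟨c, hbc, a, haN, hle⟩ := h
  exact ⟨a, haN, le_bot_iff.mp (hbc ▸ inf_le_inf_left b hle)⟩

lemma hSet_max (hnB : IsNormalLattice B) {f : A → B} (hinj : Function.Injective f)
    (hbot : f ⊥ = ⊥) (htop : f ⊤ = ⊤)
    (hinf : ∀ a b : A, f (a ⊓ b) = f a ⊓ f b)
    (hsup : ∀ a b : A, f (a ⊔ b) = f a ⊔ f b)
    (hsep : ∀ b c : B, b ⊓ c = ⊥ → ∃ a : A, b ≤ f a ∧ f a ⊓ c = ⊥)
    {N : Set A} (hN : IsMaxLatFilter N) : IsMaxLatFilter (hSet f N) := by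
  have htopN : ⊤ ∈ N := latFilter_top_mem hN.1.1
  have ftopr : ∀ p : A, f p = ⊤ → p = ⊤ := fun p h => hinj (h.trans htop.symm)
  have hproper : IsProperLatFilter (hSet f N) := by
    refine ⟨⟨⟨⊤, ?_⟩, ?_, ?_⟩, ?_⟩
    · intro c hc a haN hle
      have hc' : c = ⊥ := by simpa using hc
      rw [hc'] at hle
      have : a = ⊥ := hinj ((le_bot_iff.mp hle).trans hbot.symm)
      exact hN.1.2 (this ▸ haN)
    · intro b hb b' hbb' c hc
      exact hb c (le_bot_iff.mp (hc ▸ inf_le_inf_right c hbb'))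
    · intro b₁ hb₁ b₂ hb₂ c hc a haN hle
      have h1 : b₁ ⊓ (b₂ ⊓ c) = ⊥ := by rw [← inf_assoc]; exact hc
      obtain ⟨b₁', d, h11, h2d, hbd⟩ := hnB b₁ (b₂ ⊓ c) h1
      obtain ⟨a₁, ha₁le, ha₁d⟩ := hsep b₁' b₁ (by rw [inf_comm]; exact h11)
      obtain ⟨a₂, ha₂le, ha₂d⟩ := hsep d (b₂ ⊓ c) (by rw [inf_comm]; exact h2d)
      have hft : f (a₁ ⊔ a₂) = ⊤ :=
        top_le_iff.mp (by rw [hsup, ← hbd]; exact sup_le_sup ha₁le ha₂le)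
      have hmemN : a₁ ⊔ a₂ ∈ N := by rw [ftopr _ hft]; exact htopN
      rcases maxFilter_prime hN hmemN with h | h
      · exact hb₁ (f a₁) (by rw [inf_comm]; exact ha₁d) a₁ h le_rfl
      · have haa₂ : a ⊓ a₂ ∈ N := hN.1.1.2.2 a haN a₂ h
        apply hb₂ (f (a ⊓ a₂)) ?_ (a ⊓ a₂) haa₂ le_rfl
        rw [hinf]
        have hcalc : b₂ ⊓ (f a ⊓ f a₂) ≤ f a₂ ⊓ (b₂ ⊓ c) := by
          calc b₂ ⊓ (f a ⊓ f a₂) ≤ b₂ ⊓ (c ⊓ f a₂) :=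
                inf_le_inf_left _ (inf_le_inf_right _ hle)
            _ = f a₂ ⊓ (b₂ ⊓ c) := by ac_rfl
        exact le_bot_iff.mp (ha₂d ▸ hcalc)
    · intro hbotmem
      exact hbotmem ⊤ (by simp) ⊤ htopN le_top
  refine ⟨hproper, ?_⟩
  intro G hG hsub
  refine Set.Subset.antisymm ?_ hsub
  intro x hxG
  by_contra hx
  obtain ⟨a, haN, hxfa⟩ := not_mem_hSet hx
  obtain ⟨x', e, hxx', hae, hxe⟩ := hnB x (f a) hxfa
  obtain ⟨a₁, ha₁le, ha₁x⟩ := hsep x' x (by rw [inf_comm]; exact hxx')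
  obtain ⟨a₂, ha₂le, ha₂fa⟩ := hsep e (f a) (by rw [inf_comm]; exact hae)
  have ha₂a : a₂ ⊓ a = ⊥ := hinj (by rw [hinf, ha₂fa, hbot])
  have ha₂N : a₂ ∉ N := fun h => properFilter_disj hN.1 h haN ha₂a
  have hft : f (a₁ ⊔ a₂) = ⊤ :=
    top_le_iff.mp (by rw [hsup, ← hxe]; exact sup_le_sup ha₁le ha₂le)
  have hmemN : a₁ ⊔ a₂ ∈ N := by rw [ftopr _ hft]; exact htopN
  have ha₁N : a₁ ∈ N := (maxFilter_prime hN hmemN).resolve_right ha₂N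
  have hfa₁G : f a₁ ∈ G := hsub (image_subset_hSet hinj hbot hinf hN.1 ha₁N)
  exact properFilter_disj hG hxG hfa₁G (by rw [inf_comm]; exact ha₁x)

end Emb

/-- If `f : A → B` is a separative embedding of normal disjunctive bounded
distributive lattices — an injective bounded-lattice homomorphism such that
whenever `b ⊓ c = ⊥` in `B` there is `a ∈ A` with `b ≤ f a` and
`f a ⊓ c = ⊥` — then the induced map on maximal spectra, sending `M` to the
unique maximal filter containing `f⁻¹[M]`, is a homeomorphism. -/
theorem separative_embedding_spec_homeomorphism {A : Type u} {B : Type u}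
    [DistribLattice A] [BoundedOrder A] [DistribLattice B] [BoundedOrder B]
    (hnA : IsNormalLattice A) (hdA : IsDisjunctiveLattice A)
    (hnB : IsNormalLattice B) (hdB : IsDisjunctiveLattice B)
    (f : A → B) (hinj : Function.Injective f)
    (hbot : f ⊥ = ⊥) (htop : f ⊤ = ⊤)
    (hinf : ∀ a b : A, f (a ⊓ b) = f a ⊓ f b)
    (hsup : ∀ a b : A, f (a ⊔ b) = f a ⊔ f b)
    (hsep : ∀ b c : B, b ⊓ c = ⊥ → ∃ a : A, b ≤ f a ∧ f a ⊓ c = ⊥) :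
    ∃ g : MaxSpec B → MaxSpec A,
      (∀ M : MaxSpec B, f ⁻¹' M.1 ⊆ (g M).1) ∧
      @IsHomeomorph (MaxSpec B) (MaxSpec A) (specTop B) (specTop A) g := by
  classical
  letI tB : TopologicalSpace (MaxSpec B) := specTop B
  letI tA : TopologicalSpace (MaxSpec A) := specTop A
  set g : MaxSpec B → MaxSpec A :=
    fun M => ⟨stdSet f M.1, stdSet_max hnA hbot htop hinf hsup M.2⟩ with hgdef
  set h : MaxSpec A → MaxSpec B :=
    fun N => ⟨hSet f N.1, hSet_max hnB hinj hbot htop hinf hsup hsep N.2⟩ with hhdef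
  -- h ∘ g = id
  have hleft : Function.LeftInverse h g := by
    intro M
    apply Subtype.ext
    apply M.2.2 _ (hSet_max hnB hinj hbot htop hinf hsup hsep
      (stdSet_max hnA hbot htop hinf hsup M.2)).1
    intro b hbM c hbc a hastd hle
    have hbfa : b ⊓ f a = ⊥ := le_bot_iff.mp (hbc ▸ inf_le_inf_left b hle)
    obtain ⟨a₀, ha₀b, ha₀fa⟩ := hsep b (f a) hbfa
    have h2 : a ⊓ a₀ = ⊥ := hinj (by rw [hinf, inf_comm, ha₀fa, hbot])
    have h3 : f a₀ ∉ M.1 := hastd a₀ h2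
    exact h3 (M.2.1.1.2.1 b hbM (f a₀) ha₀b)
  -- g ∘ h = id
  have hright : Function.RightInverse h g := by
    intro N
    apply Subtype.ext
    apply N.2.2 _ (stdSet_max hnA hbot htop hinf hsup
      (hSet_max hnB hinj hbot htop hinf hsup hsep N.2)).1
    intro a haN
    exact preimage_subset_stdSet hinf hbot
      (hSet_max hnB hinj hbot htop hinf hsup hsep N.2).1
      (image_subset_hSet hinj hbot hinf N.2.1 haN)
  -- continuity of g
  have gcont : Continuous g := by
    apply continuous_generateFrom_iff.mpr
    rintro s ⟨a, rfl⟩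
    have heq : g ⁻¹' (sharp a)ᶜ =
        ⋃₀ {s : Set (MaxSpec B) |
          ∃ u v : A, a ⊓ u = ⊥ ∧ u ⊔ v = ⊤ ∧ s = (sharp (f v))ᶜ} := by
      ext M
      simp only [mem_preimage, mem_compl_iff, mem_sUnion, mem_setOf_eq]
      constructor
      · intro hM
        obtain ⟨c, hac, hfc⟩ := not_mem_stdSet hM
        obtain ⟨u, v, hau, hcv, huv⟩ := hnA a c hac
        refine ⟨(sharp (f v))ᶜ, ⟨u, v, hau, huv, rfl⟩, ?_⟩
        intro hfv
        exact properFilter_disj M.2.1 hfc hfv (by rw [← hinf, hcv, hbot])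
      · rintro ⟨s, ⟨u, v, hau, huv, rfl⟩, hMs⟩
        have hsupM : f u ⊔ f v ∈ M.1 := by
          rw [← hsup, huv, htop]; exact latFilter_top_mem M.2.1.1
        have hfu : f u ∈ M.1 := (maxFilter_prime M.2 hsupM).resolve_right hMs
        intro hstd
        exact hstd u hau hfu
    rw [heq]
    apply isOpen_sUnion
    rintro s ⟨u, v, _, _, rfl⟩
    exact TopologicalSpace.GenerateOpen.basic _ ⟨f v, rfl⟩
  -- continuity of h
  have hcont : Continuous h := by
    apply continuous_generateFrom_iff.mpr
    rintro s ⟨b, rfl⟩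
    have heq : h ⁻¹' (sharp b)ᶜ =
        ⋃₀ {s : Set (MaxSpec A) |
          ∃ p q : A, b ⊓ f p = ⊥ ∧ p ⊔ q = ⊤ ∧ s = (sharp q)ᶜ} := by
      ext N
      simp only [mem_preimage, mem_compl_iff, mem_sUnion, mem_setOf_eq]
      constructor
      · intro hN
        obtain ⟨a, haN, hbfa⟩ := not_mem_hSet hN
        obtain ⟨u, v, hbu, hav, huv⟩ := hnB b (f a) hbfa
        obtain ⟨p, hple, hpb⟩ := hsep u b (by rw [inf_comm]; exact hbu)
        obtain ⟨q, hqle, hqfa⟩ := hsep v (f a) (by rw [inf_comm]; exact hav)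
        have hqa : q ⊓ a = ⊥ := hinj (by rw [hinf, hqfa, hbot])
        have hft : f (p ⊔ q) = ⊤ :=
          top_le_iff.mp (by rw [hsup, ← huv]; exact sup_le_sup hple hqle)
        have hpq : p ⊔ q = ⊤ := hinj (hft.trans htop.symm)
        refine ⟨(sharp q)ᶜ, ⟨p, q, by rw [inf_comm]; exact hpb, hpq, rfl⟩, ?_⟩
        intro hqN
        exact properFilter_disj N.2.1 hqN haN hqa
      · rintro ⟨s, ⟨p, q, hbfp, hpq, rfl⟩, hNs⟩
        have hpqN : p ⊔ q ∈ N.1 := by rw [hpq]; exact latFilter_top_mem N.2.1.1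
        have hpN : p ∈ N.1 := (maxFilter_prime N.2 hpqN).resolve_right hNs
        intro hhS
        exact hhS (f p) hbfp p hpN le_rfl
    rw [heq]
    apply isOpen_sUnion
    rintro s ⟨p, q, _, _, rfl⟩
    exact TopologicalSpace.GenerateOpen.basic _ ⟨q, rfl⟩
  refine ⟨g, ?_, ?_⟩
  · intro M
    exact preimage_subset_stdSet hinf hbot M.2.1
  · exact (Homeomorph.mk ⟨g, h, hleft, hright⟩ gcont hcont).isHomeomorph
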